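/- The variety of flexes of plane cubics X ⊂ P² × P⁹ is unirational, i.e., there exists a dominant rational map from a projective space to X. -/

import Mathlib

open MvPolynomial Matrix

noncomputable def hesseCubic (l : ℂ) : MvPolynomial (Fin 3) ℂ :=
  X 0 ^ 3 + X 1 ^ 3 + X 2 ^ 3 + C l * (X 0 * X 1 * X 2)

noncomputable def cubicMonomial (m : Sym (Fin 3) 3) : MvPolynomial (Fin 3) ℂ :=
  ((m : Multiset (Fin 3)).map X).prod

noncomputable def cubicOf (a : Sym (Fin 3) 3 → ℂ) : MvPolynomial (Fin 3) ℂ :=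
  ∑ m : Sym (Fin 3) 3, C (a m) * cubicMonomial m

noncomputable def coeffVec (f : MvPolynomial (Fin 3) ℂ) : Sym (Fin 3) 3 → ℂ :=
  fun m => coeff (Multiset.toFinsupp (m : Multiset (Fin 3))) f

noncomputable def hessianDet (f : MvPolynomial (Fin 3) ℂ) : MvPolynomial (Fin 3) ℂ :=
  (Matrix.of fun i j : Fin 3 => pderiv i (pderiv j f)).det

abbrev P2 : Type := Projectivization ℂ (Fin 3 → ℂ)
abbrev P9 : Type := Projectivization ℂ (Sym (Fin 3) 3 → ℂ)

def FlexVariety : Set (P2 × P9) :=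
  {z | ∃ (x : Fin 3 → ℂ) (hx : x ≠ 0) (a : Sym (Fin 3) 3 → ℂ) (ha : a ≠ 0),
    z = (Projectivization.mk ℂ x hx, Projectivization.mk ℂ a ha) ∧
    eval x (cubicOf a) = 0 ∧ eval x (hessianDet (cubicOf a)) = 0}

/-- The thirteen homogeneous coordinates on `P² × P⁹`: three `x`-variables and
ten `a`-variables. -/
abbrev Vars : Type := Fin 3 ⊕ Sym (Fin 3) 3

/-- A polynomial in the coordinates of `P² × P⁹` is bihomogeneous of bidegree `(m, n)`
if it is homogeneous of degree `m` in the `x`-variables and of degree `n` in the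
`a`-variables. -/
def IsBihomogeneous (P : MvPolynomial Vars ℂ) (m n : ℕ) : Prop :=
  P.IsWeightedHomogeneous (Sum.elim (fun _ => 1) (fun _ => 0)) m ∧
  P.IsWeightedHomogeneous (Sum.elim (fun _ => 0) (fun _ => 1)) n

/-- A polynomial in the coordinates of `P² × P⁹` vanishes on a set `S ⊆ P² × P⁹`. -/
def VanishesOn (P : MvPolynomial Vars ℂ) (S : Set (P2 × P9)) : Prop :=
  ∀ (x : Fin 3 → ℂ) (hx : x ≠ 0) (a : Sym (Fin 3) 3 → ℂ) (ha : a ≠ 0),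
    (Projectivization.mk ℂ x hx, Projectivization.mk ℂ a ha) ∈ S →
      eval (Sum.elim x a) P = 0

/-- A subset `S` of the variety of flexes `X ⊆ P² × P⁹` is (Zariski) dense in `X`:
every bihomogeneous polynomial vanishing on `S` vanishes on `X`.  A map with image `S`
is then dominant onto `X`. -/
def IsDenseInFlexVariety (S : Set (P2 × P9)) : Prop :=
  S ⊆ FlexVariety ∧
  ∀ (P : MvPolynomial Vars ℂ) (m n : ℕ), IsBihomogeneous P m n →
    VanishesOn P S → VanishesOn P FlexVariety

/-- The image of the rational map `P^N ⇢ P² × P⁹` given by homogeneous forms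
`g = (g₁, g₂, g₃)` and `h = (h_m)_m` (defined where `g ≠ 0` and `h ≠ 0`). -/
def rationalImage {N : ℕ} (g : Fin 3 → MvPolynomial (Fin (N + 1)) ℂ)
    (h : Sym (Fin 3) 3 → MvPolynomial (Fin (N + 1)) ℂ) : Set (P2 × P9) :=
  {z | ∃ (v : Fin (N + 1) → ℂ) (hg : (fun i => eval v (g i)) ≠ 0)
      (hh : (fun m => eval v (h m)) ≠ 0),
    z = (Projectivization.mk ℂ _ hg, Projectivization.mk ℂ _ hh)}

/-!
A cubic `F` has a flex at `x` exactly when some line `L` through `x` meets it there with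
multiplicity at least three: the direction of `L` is a kernel vector of the Hessian matrix at `x`,
or, when `x` is a singular point, an isotropic vector of it. If `m` is a linear form vanishing at
`x` but not on `L`, then `F - c m³` vanishes on `L` for a suitable `c`, so it is divisible by the
equation of `L`. Writing `L` as the line through `x` and `y` and `m` as the line through `x` and
`w`, every cubic with a flex at `x` is therefore `((x × y) ⬝ X) Q + c ((x × w) ⬝ X)³` for a
quadratic form `Q`. Conversely every such cubic has a flex at `x`, its Hessian matrix at `x` being
a sum of two matrices of rank one. Hence `(x, y, w, Q, c) ↦ (x, F)` maps onto the variety of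
flexes.
-/

namespace FlexCubic

lemma toFinsupp_sym_injective {σ : Type*} [DecidableEq σ] {n : ℕ} :
    Function.Injective fun m : Sym σ n => Multiset.toFinsupp (m : Multiset σ) :=
  fun _ _ h => Sym.coe_injective (Multiset.toFinsupp.injective h)

lemma degree_toFinsupp_sym {σ : Type*} [DecidableEq σ] {n : ℕ} (m : Sym σ n) :
    (Multiset.toFinsupp (m : Multiset σ)).degree = n :=
  (Multiset.toFinsupp_sum_eq _).trans m.2

lemma prod_map_X {σ R : Type*} [CommSemiring R] [DecidableEq σ] (s : Multiset σ) :
    (s.map X).prod = monomial (Multiset.toFinsupp s) (1 : R) := by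
  induction s using Multiset.induction_on with
  | empty => simp
  | cons a s ih =>
    rw [Multiset.map_cons, Multiset.prod_cons, ih, X, monomial_mul, one_mul,
      ← Multiset.singleton_add, Multiset.toFinsupp_add, Multiset.toFinsupp_singleton]

lemma card_toMultiset_of_mem_support {σ R : Type*} [CommSemiring R] {f : MvPolynomial σ R}
    {n : ℕ} (hf : f.IsHomogeneous n) {d : σ →₀ ℕ} (hd : d ∈ f.support) :
    Multiset.card (Finsupp.toMultiset d) = n := by
  have hdeg : d.degree = n := by
    rw [Finsupp.degree_eq_weight_one]; exact hf (mem_support_iff.mp hd)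
  rw [Finsupp.card_toMultiset, ← hdeg, Finsupp.degree_apply, Finsupp.sum]; rfl

section SymForm

variable {σ R : Type*} [Fintype σ] [DecidableEq σ] [CommSemiring R] {n : ℕ}

noncomputable def symForm (q : Sym σ n → R) : MvPolynomial σ R :=
  ∑ m : Sym σ n, monomial (Multiset.toFinsupp (m : Multiset σ)) (q m)

lemma symForm_isHomogeneous (q : Sym σ n → R) : (symForm q).IsHomogeneous n :=
  IsHomogeneous.sum _ _ _ fun m _ => isHomogeneous_monomial _ (degree_toFinsupp_sym m)

lemma coeff_symForm (q : Sym σ n → R) (m : Sym σ n) :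
    coeff (Multiset.toFinsupp (m : Multiset σ)) (symForm q) = q m := by
  rw [symForm, coeff_sum, Finset.sum_eq_single m (fun m' _ hm' => ?_) (by simp), coeff_monomial,
    if_pos rfl]
  rw [coeff_monomial, if_neg fun h => hm' (toFinsupp_sym_injective h)]

lemma symForm_coeff {f : MvPolynomial σ R} (hf : f.IsHomogeneous n) :
    symForm (fun m : Sym σ n => coeff (Multiset.toFinsupp (m : Multiset σ)) f) = f := by
  have hsupp : f.support ⊆
      Finset.univ.image fun m : Sym σ n => Multiset.toFinsupp (m : Multiset σ) :=
    fun d hd => Finset.mem_image.mpr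
      ⟨⟨_, card_toMultiset_of_mem_support hf hd⟩, Finset.mem_univ _, by simp⟩
  rw [symForm, ← Finset.sum_image (f := fun d => monomial d (coeff d f))
      fun _ _ _ _ h => toFinsupp_sym_injective h,
    ← Finset.sum_subset hsupp fun d _ hd => by rw [notMem_support_iff.mp hd, monomial_zero]]
  exact f.support_sum_monomial_coeff

lemma map_symForm {S : Type*} [CommSemiring S] (f : R →+* S) (q : Sym σ n → R) :
    map f (symForm q) = symForm (f ∘ q) := by
  simp [symForm]

end SymForm

lemma cubicOf_eq_symForm (a : Sym (Fin 3) 3 → ℂ) : cubicOf a = symForm a := by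
  simp only [cubicOf, cubicMonomial, symForm, prod_map_X, C_mul_monomial, mul_one]

lemma cubicOf_isHomogeneous (a : Sym (Fin 3) 3 → ℂ) : (cubicOf a).IsHomogeneous 3 :=
  cubicOf_eq_symForm a ▸ symForm_isHomogeneous a

lemma coeffVec_cubicOf (a : Sym (Fin 3) 3 → ℂ) : coeffVec (cubicOf a) = a :=
  funext fun m => by rw [coeffVec, cubicOf_eq_symForm, coeff_symForm]

lemma cubicOf_coeffVec {f : MvPolynomial (Fin 3) ℂ} (hf : f.IsHomogeneous 3) :
    cubicOf (coeffVec f) = f := by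
  rw [cubicOf_eq_symForm]; exact symForm_coeff hf

section LinearForm

variable {σ R : Type*} [Fintype σ] [CommSemiring R]

noncomputable def linearForm (c : σ → R) : MvPolynomial σ R :=
  ∑ i, C (c i) * X i

@[simp] lemma eval_linearForm (c u : σ → R) : eval u (linearForm c) = c ⬝ᵥ u := by
  simp [linearForm, dotProduct]

@[simp] lemma pderiv_linearForm (c : σ → R) (p : σ) : pderiv p (linearForm c) = C (c p) := by
  classical
  simp [linearForm, pderiv_X, Pi.single_apply]

lemma linearForm_isHomogeneous (c : σ → R) : (linearForm c).IsHomogeneous 1 :=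
  IsHomogeneous.sum _ _ _ fun i _ => by simpa using isHomogeneous_C_mul_X (c i) i

lemma map_linearForm {S : Type*} [CommSemiring S] (f : R →+* S) (c : σ → R) :
    map f (linearForm c) = linearForm (f ∘ c) := by
  simp [linearForm]

end LinearForm

lemma linearForm_dvd_of_eval_eq_zero {σ K : Type*} [Fintype σ] [Field K] [Infinite K]
    {c : σ → K} (hc : c ≠ 0) {G : MvPolynomial σ K}
    (hG : ∀ u, c ⬝ᵥ u = 0 → eval u G = 0) : linearForm c ∣ G := by
  classical
  obtain ⟨k, hk⟩ : ∃ k, c k ≠ 0 := Function.ne_iff.mp hc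
  set e : σ → K := Pi.single k (c k)⁻¹
  -- the projection along `e` onto the hyperplane `c ⬝ᵥ u = 0`: it kills `G`, and it is the
  -- identity modulo `linearForm c`
  set π : MvPolynomial σ K →ₐ[K] MvPolynomial σ K := aeval fun i => X i - C (e i) * linearForm c
  have eval_π (u : σ → K) (P : MvPolynomial σ K) :
      eval u (π P) = eval (u - (c ⬝ᵥ u) • e) P := by
    induction P using MvPolynomial.induction_on <;> simp_all [π, mul_comm]
  have hπG : π G = 0 := MvPolynomial.funext fun u => by
    rw [eval_π, map_zero]
    exact hG _ (by simp [e, dotProduct_sub, dotProduct_smul, mul_inv_cancel₀ hk])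
  set I := Ideal.span {linearForm c}
  have hI : Ideal.Quotient.mk I (linearForm c) = 0 :=
    Ideal.Quotient.eq_zero_iff_mem.mpr (Ideal.mem_span_singleton_self _)
  have hπ : (Ideal.Quotient.mkₐ K I).comp π = Ideal.Quotient.mkₐ K I :=
    algHom_ext fun i => by simp [π, hI]
  rw [← Ideal.mem_span_singleton, ← sub_zero G, ← hπG, ← Ideal.Quotient.eq]
  exact (AlgHom.congr_fun hπ G).symm

attribute [local instance] MvPolynomial.gradedAlgebra in
lemma homogeneousComponent_add_mul {σ R : Type*} [CommSemiring R] {A : MvPolynomial σ R}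
    {i : ℕ} (hA : A.IsHomogeneous i) (Q : MvPolynomial σ R) (n : ℕ) :
    homogeneousComponent (i + n) (A * Q) = A * homogeneousComponent n Q := by
  simpa [← decomposition.decompose'_apply] using
    DirectSum.coe_decompose_mul_add_of_left_mem (homogeneousSubmodule σ R) (b := Q) (j := n) hA

lemma exists_isHomogeneous_eq_mul_of_dvd {σ R : Type*} [CommSemiring R]
    {A G : MvPolynomial σ R} {i n : ℕ} (hA : A.IsHomogeneous i) (hG : G.IsHomogeneous (i + n))
    (hAG : A ∣ G) : ∃ Q : MvPolynomial σ R, Q.IsHomogeneous n ∧ G = A * Q := by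
  obtain ⟨Q, rfl⟩ := hAG
  exact ⟨homogeneousComponent n Q, homogeneousComponent_isHomogeneous n Q,
    by rw [← homogeneousComponent_add_mul hA, homogeneousComponent_eq_self hG]⟩

section CrossProduct

variable {R : Type*} [CommRing R]

lemma cross_dotProduct (x w y : Fin 3 → R) : (x ⨯₃ w) ⬝ᵥ y = -(w ⬝ᵥ x ⨯₃ y) := by
  rw [dotProduct_comm, triple_product_permutation, triple_product_permutation, ← cross_anticomm,
    dotProduct_neg]

/-- Cramer's rule for the basis `w, x, y`. -/
lemma dotProduct_cross_smul (w x y u : Fin 3 → R) :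
    (w ⬝ᵥ x ⨯₃ y) • u = (u ⬝ᵥ x ⨯₃ y) • w + (w ⬝ᵥ u ⨯₃ y) • x + (w ⬝ᵥ x ⨯₃ u) • y := by
  ext i
  fin_cases i <;> simp [cross_apply, dotProduct, Fin.sum_univ_three] <;> ring

lemma exists_dotProduct_cross_ne_zero {x y : Fin 3 → R} (h : x ⨯₃ y ≠ 0) :
    ∃ w, w ⬝ᵥ x ⨯₃ y ≠ 0 := by
  by_contra! hw
  exact h (dotProduct_eq_zero_iff.mp fun w => by rw [dotProduct_comm]; exact hw w)

lemma cross_isHomogeneous {σ : Type*} {x y : Fin 3 → MvPolynomial σ R}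
    (hx : ∀ i, (x i).IsHomogeneous 1) (hy : ∀ i, (y i).IsHomogeneous 1) (i : Fin 3) :
    ((x ⨯₃ y) i).IsHomogeneous 2 := by
  fin_cases i <;> exact ((hx _).mul (hy _)).sub ((hx _).mul (hy _))

lemma map_cross {S : Type*} [CommRing S] (f : R →+* S) (x y : Fin 3 → R) :
    f ∘ (x ⨯₃ y) = (f ∘ x) ⨯₃ (f ∘ y) := by
  ext i
  fin_cases i <;> simp [cross_apply]

end CrossProduct

lemma linearForm_cross_dvd {K : Type*} [Field K] [Infinite K] {x y : Fin 3 → K}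
    (hxy : LinearIndependent K ![x, y]) {G : MvPolynomial (Fin 3) K}
    (hG : ∀ s t : K, eval (s • x + t • y) G = 0) : linearForm (x ⨯₃ y) ∣ G := by
  have hn := crossProduct_ne_zero_iff_linearIndependent.mpr hxy
  obtain ⟨w, hw⟩ := exists_dotProduct_cross_ne_zero hn
  refine linearForm_dvd_of_eval_eq_zero hn fun u hu => ?_
  have hu' : u = ((w ⬝ᵥ x ⨯₃ y)⁻¹ * (w ⬝ᵥ u ⨯₃ y)) • x + ((w ⬝ᵥ x ⨯₃ y)⁻¹ * (w ⬝ᵥ x ⨯₃ u)) • y := by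
    rw [mul_smul, mul_smul, ← smul_add, eq_inv_smul_iff₀ hw, dotProduct_cross_smul,
      dotProduct_comm, hu, zero_smul, zero_add]
  rw [hu']
  exact hG _ _

@[elab_as_elim]
lemma isHomogeneous_three_induction {σ R : Type*} [CommSemiring R]
    {P : MvPolynomial σ R → Prop} {F : MvPolynomial σ R} (hF : F.IsHomogeneous 3) (zero : P 0)
    (add : ∀ f g, P f → P g → P (f + g))
    (C_mul_X_mul_X_mul_X : ∀ r i j k, P (C r * (X i * X j * X k))) : P F := by
  classical
  rw [← F.support_sum_monomial_coeff]
  refine Finset.sum_induction _ P add zero fun d hd => ?_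
  obtain ⟨i, j, k, hijk⟩ := Multiset.card_eq_three.mp (card_toMultiset_of_mem_support hF hd)
  have hmon : monomial d (1 : R) = X i * X j * X k := by
    rw [← Finsupp.toMultiset_toFinsupp d, ← prod_map_X, hijk]
    simp [mul_assoc]
  rw [← mul_one (coeff d F), ← C_mul_monomial, hmon]
  exact C_mul_X_mul_X_mul_X _ i j k

section DirDeriv

variable {σ R : Type*} [Fintype σ] [CommSemiring R]

noncomputable def dirDeriv (y : σ → R) : Derivation R (MvPolynomial σ R) (MvPolynomial σ R) :=
  ∑ j, y j • pderiv j

lemma dirDeriv_apply (y : σ → R) (F : MvPolynomial σ R) :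
    dirDeriv y F = ∑ j, C (y j) * pderiv j F := by
  rw [dirDeriv, ← Derivation.coeFnAddMonoidHom_apply, map_sum, Finset.sum_apply]
  simp [smul_eq_C_mul]

@[simp] lemma dirDeriv_X (y : σ → R) (i : σ) : dirDeriv y (X i) = C (y i) := by
  classical
  simp [dirDeriv_apply, pderiv_X, Pi.single_apply]

lemma dirDeriv_smul (r : R) (y : σ → R) : dirDeriv (r • y) = r • dirDeriv y := by
  simp [dirDeriv, Finset.smul_sum, smul_smul]

end DirDeriv

lemma dirDeriv_comm {σ R : Type*} [Fintype σ] [CommRing R] (u v : σ → R)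
    (F : MvPolynomial σ R) : dirDeriv u (dirDeriv v F) = dirDeriv v (dirDeriv u F) := by
  have h : ⁅dirDeriv u, dirDeriv v⁆ = 0 := derivation_ext fun i => by
    simp [Derivation.commutator_apply, derivation_C]
  rw [← sub_eq_zero, ← Derivation.commutator_apply, h, Derivation.zero_apply]

section CubicForm

variable {σ R : Type*} [Fintype σ] [CommRing R] {F : MvPolynomial σ R}

lemma cubic_eval_smul_add_smul (hF : F.IsHomogeneous 3) (x y : σ → R) (s t : R) :
    eval (s • x + t • y) F =
      s ^ 3 * eval x F + s ^ 2 * t * eval x (dirDeriv y F)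
        + s * t ^ 2 * eval y (dirDeriv x F) + t ^ 3 * eval y F := by
  refine isHomogeneous_three_induction hF ?_ ?_ ?_
  · simp
  · intro f g hf hg; simp only [map_add, hf, hg]; ring
  · intro r i j k; simp [Derivation.leibniz]; ring

lemma cubic_eval_dirDeriv_dirDeriv_self (hF : F.IsHomogeneous 3) (x w : σ → R) :
    eval x (dirDeriv w (dirDeriv x F)) = 2 * eval x (dirDeriv w F) := by
  refine isHomogeneous_three_induction hF ?_ ?_ ?_
  · simp
  · intro f g hf hg; simp only [map_add, hf, hg]; ring
  · intro r i j k; simp [Derivation.leibniz]; ring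

lemma cubic_eval_dirDeriv_dirDeriv (hF : F.IsHomogeneous 3) (x y : σ → R) :
    eval x (dirDeriv y (dirDeriv y F)) = 2 * eval y (dirDeriv x F) := by
  refine isHomogeneous_three_induction hF ?_ ?_ ?_
  · simp
  · intro f g hf hg; simp only [map_add, hf, hg]; ring
  · intro r i j k; simp [Derivation.leibniz]; ring

end CubicForm

section Hessian

variable {σ R : Type*} [Fintype σ] [CommRing R]

noncomputable def hessianAt (F : MvPolynomial σ R) (x : σ → R) : Matrix σ σ R :=
  of fun p q => eval x (pderiv p (pderiv q F))

lemma dotProduct_hessianAt_mulVec (F : MvPolynomial σ R) (x w z : σ → R) :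
    w ⬝ᵥ hessianAt F x *ᵥ z = eval x (dirDeriv w (dirDeriv z F)) := by
  simp only [hessianAt, dirDeriv_apply, dotProduct, mulVec, of_apply, map_sum, eval_mul, eval_C,
    pderiv_C_mul, Finset.mul_sum]
  rw [Finset.sum_comm]
  exact Finset.sum_congr rfl fun _ _ => Finset.sum_congr rfl fun _ _ => by ring

lemma eval_pderiv_pderiv_linearForm_mul {α x : σ → R} (hα : α ⬝ᵥ x = 0)
    (G : MvPolynomial σ R) (p q : σ) :
    eval x (pderiv p (pderiv q (linearForm α * G))) =
      α q * eval x (pderiv p G) + α p * eval x (pderiv q G) := by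
  simp [hα]; ring

lemma eval_pderiv_pderiv_linearForm_pow_three {β x : σ → R} (hβ : β ⬝ᵥ x = 0) (p q : σ) :
    eval x (pderiv p (pderiv q (linearForm β ^ 3))) = 0 := by
  simp [hβ]

end Hessian

lemma eval_hessianDet (F : MvPolynomial (Fin 3) ℂ) (x : Fin 3 → ℂ) :
    eval x (hessianDet F) = (hessianAt F x).det := by
  rw [hessianDet, RingHom.map_det]; rfl

lemma det_vecMulVec_add_vecMulVec {R : Type*} [CommRing R] (a b c d : Fin 3 → R) :
    (vecMulVec a b + vecMulVec c d).det = 0 := by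
  simp [det_fin_three, vecMulVec_apply]; ring

lemma det_hessianAt_linearForm_mul_add {R : Type*} [CommRing R] {α β x : Fin 3 → R}
    (hα : α ⬝ᵥ x = 0) (hβ : β ⬝ᵥ x = 0) (G : MvPolynomial (Fin 3) R) (c : R) :
    (hessianAt (linearForm α * G + C c * linearForm β ^ 3) x).det = 0 := by
  set g : Fin 3 → R := fun p => eval x (pderiv p G)
  have hH : hessianAt (linearForm α * G + C c * linearForm β ^ 3) x =
      vecMulVec g α + vecMulVec α g := by
    ext p q
    simp only [hessianAt, of_apply, map_add, pderiv_C_mul, eval_C, eval_mul,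
      eval_pderiv_pderiv_linearForm_mul hα, eval_pderiv_pderiv_linearForm_pow_three hβ,
      Matrix.add_apply, vecMulVec_apply, g]
    ring
  rw [hH, det_vecMulVec_add_vecMulVec]

section Flex

variable {K : Type*} [Field K] [IsAlgClosed K] [NeZero (2 : K)]

lemma exists_pair_ne_zero_quadratic_eq_zero (A B C : K) :
    ∃ β γ : K, (β ≠ 0 ∨ γ ≠ 0) ∧ A * β ^ 2 + B * (β * γ) + C * γ ^ 2 = 0 := by
  by_cases hA : A = 0
  · exact ⟨1, 0, Or.inl one_ne_zero, by simp [hA]⟩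
  · obtain ⟨s, hs⟩ := IsAlgClosed.exists_eq_mul_self (B ^ 2 - 4 * A * C)
    exact ⟨-B + s, 2 * A, Or.inr (mul_ne_zero two_ne_zero hA), by linear_combination -A * hs⟩

lemma exists_linearIndependent_isotropic (A : Matrix (Fin 3) (Fin 3) K) {x : Fin 3 → K}
    (hx : x ≠ 0) : ∃ y, LinearIndependent K ![x, y] ∧ y ⬝ᵥ A *ᵥ y = 0 := by
  obtain ⟨k, hk⟩ : ∃ k, x k ≠ 0 := Function.ne_iff.mp hx
  have h₁₂ : k + 2 ≠ k + 1 := by fin_cases k <;> decide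
  set u : Fin 3 → K := Pi.single (k + 1) 1
  set v : Fin 3 → K := Pi.single (k + 2) 1
  obtain ⟨β, γ, hβγ, hq⟩ :=
    exists_pair_ne_zero_quadratic_eq_zero (u ⬝ᵥ A *ᵥ u) (u ⬝ᵥ A *ᵥ v + v ⬝ᵥ A *ᵥ u) (v ⬝ᵥ A *ᵥ v)
  refine ⟨β • u + γ • v, (LinearIndependent.pair_iff' hx).mpr fun a ha => ?_, ?_⟩
  · have hak := congrFun ha k
    simp [u, v, hk] at hak
    subst hak
    have hβ := congrFun ha (k + 1)
    have hγ := congrFun ha (k + 2)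
    simp [u, v, h₁₂, h₁₂.symm] at hβ hγ
    exact hβγ.elim (· hβ.symm) (· hγ.symm)
  · simp only [mulVec_add, mulVec_smul, dotProduct_add, add_dotProduct, dotProduct_smul,
      smul_dotProduct, smul_eq_mul]
    linear_combination hq

lemma exists_flex_direction {F : MvPolynomial (Fin 3) K} (hF : F.IsHomogeneous 3)
    {x : Fin 3 → K} (hx : x ≠ 0) (hH : (hessianAt F x).det = 0) :
    ∃ y, LinearIndependent K ![x, y] ∧ eval x (dirDeriv y F) = 0 ∧ eval y (dirDeriv x F) = 0 := by
  have two_mul_eq_zero {e : K} (h : 2 * e = 0) : e = 0 :=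
    (mul_eq_zero.mp h).resolve_left two_ne_zero
  obtain ⟨z, hz, hHz⟩ := exists_mulVec_eq_zero_iff.mpr hH
  have hker (w : Fin 3 → K) : eval x (dirDeriv w (dirDeriv z F)) = 0 := by
    rw [← dotProduct_hessianAt_mulVec, hHz, dotProduct_zero]
  by_cases hxz : LinearIndependent K ![x, z]
  · refine ⟨z, hxz, two_mul_eq_zero ?_, two_mul_eq_zero ?_⟩
    · rw [← cubic_eval_dirDeriv_dirDeriv_self hF, dirDeriv_comm, hker]
    · rw [← cubic_eval_dirDeriv_dirDeriv hF, hker]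
  -- `z` is a multiple of `x`, so `x` is a singular point of the cubic
  obtain ⟨a, rfl⟩ : ∃ a : K, a • x = z := by simpa [LinearIndependent.pair_iff' hx] using hxz
  have ha : a ≠ 0 := by rintro rfl; simp at hz
  have hgrad (w : Fin 3 → K) : eval x (dirDeriv w F) = 0 := by
    have h := hker w
    simp [dirDeriv_smul, ha] at h
    exact two_mul_eq_zero (by rw [← cubic_eval_dirDeriv_dirDeriv_self hF, h])
  obtain ⟨y, hxy, hy⟩ := exists_linearIndependent_isotropic (hessianAt F x) hx
  refine ⟨y, hxy, hgrad y, two_mul_eq_zero ?_⟩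
  rw [← cubic_eval_dirDeriv_dirDeriv hF, ← dotProduct_hessianAt_mulVec, hy]

end Flex

/-- The factor `u ^ 4` gives both summands degree `7` in the parameters. -/
noncomputable def flexCubic {R : Type*} [CommRing R] (x y w : Fin 3 → R)
    (q : Sym (Fin 3) 2 → R) (c u : R) : MvPolynomial (Fin 3) R :=
  linearForm (x ⨯₃ y) * (C (u ^ 4) * symForm q) + C c * linearForm (x ⨯₃ w) ^ 3

section Family

variable {R : Type*} [CommRing R] (x y w : Fin 3 → R) (q : Sym (Fin 3) 2 → R) (c u : R)

lemma flexCubic_isHomogeneous : (flexCubic x y w q c u).IsHomogeneous 3 :=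
  ((linearForm_isHomogeneous _).mul ((isHomogeneous_C _ _).mul (symForm_isHomogeneous q))).add
    ((isHomogeneous_C _ c).mul ((linearForm_isHomogeneous _).pow 3))

lemma map_flexCubic {S : Type*} [CommRing S] (f : R →+* S) :
    map f (flexCubic x y w q c u) = flexCubic (f ∘ x) (f ∘ y) (f ∘ w) (f ∘ q) (f c) (f u) := by
  simp [flexCubic, map_linearForm, map_symForm, map_cross]

lemma eval_flexCubic_self : eval x (flexCubic x y w q c u) = 0 := by
  simp [flexCubic, cross_dotProduct]

end Family

lemma eval_hessianDet_flexCubic_self (x y w : Fin 3 → ℂ) (q : Sym (Fin 3) 2 → ℂ) (c u : ℂ) :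
    eval x (hessianDet (flexCubic x y w q c u)) = 0 := by
  rw [eval_hessianDet, flexCubic]
  exact det_hessianAt_linearForm_mul_add (by simp [cross_dotProduct])
    (by simp [cross_dotProduct]) _ _

lemma exists_flexCubic_eq {K : Type*} [Field K] [IsAlgClosed K] [NeZero (2 : K)]
    {F : MvPolynomial (Fin 3) K} (hF : F.IsHomogeneous 3) {x : Fin 3 → K} (hx : x ≠ 0)
    (hFx : eval x F = 0) (hH : (hessianAt F x).det = 0) :
    ∃ y w q c, flexCubic x y w q c 1 = F := by
  obtain ⟨y, hxy, hyx, hxy'⟩ := exists_flex_direction hF hx hH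
  obtain ⟨w, hw⟩ :=
    exists_dotProduct_cross_ne_zero (crossProduct_ne_zero_iff_linearIndependent.mpr hxy)
  have hd : (x ⨯₃ w) ⬝ᵥ y ≠ 0 := by rw [cross_dotProduct]; exact neg_ne_zero.mpr hw
  set c := eval y F / ((x ⨯₃ w) ⬝ᵥ y) ^ 3
  have hline (s t : K) : eval (s • x + t • y) (F - C c * linearForm (x ⨯₃ w) ^ 3) = 0 := by
    simp only [map_sub, map_mul, map_pow, eval_C, eval_linearForm, dotProduct_add,
      dotProduct_smul, cubic_eval_smul_add_smul hF, hFx, hyx, hxy', cross_dotProduct x w x,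
      cross_self, dotProduct_zero, neg_zero, smul_eq_mul, c]
    field_simp
    ring
  obtain ⟨Q, hQ, hGQ⟩ :=
    exists_isHomogeneous_eq_mul_of_dvd (linearForm_isHomogeneous (x ⨯₃ y)) (n := 2)
    (hF.sub ((isHomogeneous_C _ c).mul ((linearForm_isHomogeneous _).pow 3)))
    (linearForm_cross_dvd hxy hline)
  refine ⟨y, w, fun m => coeff (Multiset.toFinsupp (m : Multiset (Fin 3))) Q, c, ?_⟩
  rw [flexCubic, symForm_coeff hQ, one_pow, map_one, one_mul, ← hGQ, sub_add_cancel]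

section CoeffwiseHomogeneous

variable {σ τ R : Type*} [CommSemiring R]

def IsCoeffwiseHomogeneous (P : MvPolynomial σ (MvPolynomial τ R)) (n : ℕ) : Prop :=
  ∀ d, (coeff d P).IsHomogeneous n

lemma isCoeffwiseHomogeneous_monomial (d : σ →₀ ℕ) {s : MvPolynomial τ R} {n : ℕ}
    (hs : s.IsHomogeneous n) : IsCoeffwiseHomogeneous (monomial d s) n := fun t => by
  classical
  rw [coeff_monomial]
  split_ifs
  exacts [hs, isHomogeneous_zero _ _ _]

lemma isCoeffwiseHomogeneous_C {s : MvPolynomial τ R} {n : ℕ} (hs : s.IsHomogeneous n) :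
    IsCoeffwiseHomogeneous (C s : MvPolynomial σ _) n :=
  isCoeffwiseHomogeneous_monomial 0 hs

lemma isCoeffwiseHomogeneous_X (i : σ) :
    IsCoeffwiseHomogeneous (X i : MvPolynomial σ (MvPolynomial τ R)) 0 :=
  isCoeffwiseHomogeneous_monomial _ (isHomogeneous_one _ _)

namespace IsCoeffwiseHomogeneous

variable {P Q : MvPolynomial σ (MvPolynomial τ R)} {m n : ℕ}

lemma add (hP : IsCoeffwiseHomogeneous P n) (hQ : IsCoeffwiseHomogeneous Q n) :
    IsCoeffwiseHomogeneous (P + Q) n := fun t => by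
  rw [coeff_add]; exact (hP t).add (hQ t)

lemma mul (hP : IsCoeffwiseHomogeneous P m) (hQ : IsCoeffwiseHomogeneous Q n) :
    IsCoeffwiseHomogeneous (P * Q) (m + n) := fun t => by
  classical
  rw [coeff_mul]; exact IsHomogeneous.sum _ _ _ fun d _ => (hP d.1).mul (hQ d.2)

lemma pow (hP : IsCoeffwiseHomogeneous P n) (k : ℕ) : IsCoeffwiseHomogeneous (P ^ k) (n * k) := by
  induction k with
  | zero => simpa using isCoeffwiseHomogeneous_C (σ := σ) (isHomogeneous_one τ R)
  | succ k ih => rw [pow_succ]; exact ih.mul hP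

lemma sum {ι : Type*} (s : Finset ι) {P : ι → MvPolynomial σ (MvPolynomial τ R)}
    (hP : ∀ i ∈ s, IsCoeffwiseHomogeneous (P i) n) : IsCoeffwiseHomogeneous (∑ i ∈ s, P i) n :=
  fun t => by rw [coeff_sum]; exact IsHomogeneous.sum _ _ _ fun i hi => hP i hi t

end IsCoeffwiseHomogeneous

lemma isCoeffwiseHomogeneous_linearForm [Fintype σ] {c : σ → MvPolynomial τ R} {n : ℕ}
    (hc : ∀ i, (c i).IsHomogeneous n) : IsCoeffwiseHomogeneous (linearForm c) n :=
  .sum _ fun i _ => by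
    simpa using (isCoeffwiseHomogeneous_C (hc i)).mul (isCoeffwiseHomogeneous_X i)

lemma isCoeffwiseHomogeneous_symForm [Fintype σ] [DecidableEq σ] {k : ℕ}
    {q : Sym σ k → MvPolynomial τ R} {n : ℕ} (hq : ∀ m, (q m).IsHomogeneous n) :
    IsCoeffwiseHomogeneous (symForm q) n :=
  .sum _ fun m _ => isCoeffwiseHomogeneous_monomial _ (hq m)

end CoeffwiseHomogeneous

/-- Coordinates `x, y, w, q, c, u` on the parameter space of `flexCubic`. -/
abbrev Param : Type := Fin 3 ⊕ Fin 3 ⊕ Fin 3 ⊕ Sym (Fin 3) 2 ⊕ Fin 2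

noncomputable def flexFamily {R : Type*} [CommRing R] (v : Param → R) : MvPolynomial (Fin 3) R :=
  flexCubic (fun i => v (.inl i)) (fun i => v (.inr (.inl i))) (fun i => v (.inr (.inr (.inl i))))
    (fun m => v (.inr (.inr (.inr (.inl m))))) (v (.inr (.inr (.inr (.inr 0)))))
    (v (.inr (.inr (.inr (.inr 1)))))

lemma map_eval_flexFamily_X {R : Type*} [CommRing R] (p : Param → R) :
    map (eval p) (flexFamily X) = flexFamily p := by
  simp only [flexFamily, map_flexCubic, Function.comp_def, eval_X]

lemma isCoeffwiseHomogeneous_flexFamily_X :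
    IsCoeffwiseHomogeneous (flexFamily (X : Param → MvPolynomial Param ℂ)) 7 := by
  have hX (i : Param) : (X i : MvPolynomial Param ℂ).IsHomogeneous 1 := isHomogeneous_X _ _
  have hcross (i : Fin 3 → Param) (j : Fin 3 → Param) :=
    isCoeffwiseHomogeneous_linearForm (σ := Fin 3)
      (cross_isHomogeneous (fun k => hX (i k)) (fun k => hX (j k)))
  exact ((hcross _ _).mul ((isCoeffwiseHomogeneous_C ((hX _).pow 4)).mul
      (isCoeffwiseHomogeneous_symForm fun m => hX _))).add
    ((isCoeffwiseHomogeneous_C (hX _)).mul ((hcross _ _).pow 3))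

noncomputable def paramEquiv : Param ≃ Fin 17 :=
  Fintype.equivFinOfCardEq (by simp [Sym.card_sym_eq_choose]; rfl)

noncomputable def flexPointForm (i : Fin 3) : MvPolynomial (Fin 17) ℂ :=
  X (paramEquiv (.inl i))

noncomputable def flexCubicForm (m : Sym (Fin 3) 3) : MvPolynomial (Fin 17) ℂ :=
  rename paramEquiv (coeff (Multiset.toFinsupp (m : Multiset (Fin 3))) (flexFamily X))

lemma eval_flexPointForm (v : Fin 17 → ℂ) :
    (fun i => eval v (flexPointForm i)) = fun i => v (paramEquiv (.inl i)) := by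
  simp [flexPointForm]

lemma eval_flexCubicForm (v : Fin 17 → ℂ) :
    (fun m => eval v (flexCubicForm m)) = coeffVec (flexFamily (v ∘ paramEquiv)) := by
  ext m
  rw [flexCubicForm, eval_rename, coeffVec, ← coeff_map, map_eval_flexFamily_X]

lemma rationalImage_flexForms : rationalImage flexPointForm flexCubicForm = FlexVariety := by
  refine subset_antisymm ?_ ?_
  · rintro _ ⟨v, hg, hh, rfl⟩
    refine ⟨_, hg, _, hh, rfl, ?_, ?_⟩ <;>
      rw [eval_flexPointForm, eval_flexCubicForm, flexFamily,
        cubicOf_coeffVec (flexCubic_isHomogeneous _ _ _ _ _ _)]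
    exacts [eval_flexCubic_self .., eval_hessianDet_flexCubic_self ..]
  · rintro _ ⟨x, hx, a, ha, rfl, hFx, hH⟩
    rw [eval_hessianDet] at hH
    obtain ⟨y, w, q, c, hF⟩ := exists_flexCubic_eq (cubicOf_isHomogeneous a) hx hFx hH
    set v : Param → ℂ := Sum.elim x (Sum.elim y (Sum.elim w (Sum.elim q ![c, 1])))
    have hg : (fun i => eval (v ∘ paramEquiv.symm) (flexPointForm i)) = x := by
      simp [eval_flexPointForm, v]
    have hh : (fun m => eval (v ∘ paramEquiv.symm) (flexCubicForm m)) = a := by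
      rw [eval_flexCubicForm, Function.comp_assoc, Equiv.symm_comp_self, Function.comp_id]
      simpa [flexFamily, v, hF] using coeffVec_cubicOf a
    refine ⟨v ∘ paramEquiv.symm, hg ▸ hx, hh ▸ ha, ?_⟩
    congr
    exacts [hg.symm, hh.symm]

end FlexCubic

/-- The variety of flexes of plane cubics `X ⊆ P² × P⁹` is unirational:
there is a dominant rational map from a projective space `P^N` to `X`, i.e. a rational map
given by homogeneous forms, whose image lies in `X` and is dense in `X`. -/
theorem stmt4 :
    ∃ (N d₁ d₂ : ℕ) (g : Fin 3 → MvPolynomial (Fin (N + 1)) ℂ)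
      (h : Sym (Fin 3) 3 → MvPolynomial (Fin (N + 1)) ℂ),
      (∀ i, (g i).IsHomogeneous d₁) ∧ (∀ m, (h m).IsHomogeneous d₂) ∧
      IsDenseInFlexVariety (rationalImage g h) := by
  refine ⟨16, 1, 7, FlexCubic.flexPointForm, FlexCubic.flexCubicForm,
    fun i => isHomogeneous_X _ _,
    fun m => (FlexCubic.isCoeffwiseHomogeneous_flexFamily_X _).rename_isHomogeneous, ?_⟩
  rw [FlexCubic.rationalImage_flexForms]
  exact ⟨subset_rfl, fun _ _ _ _ h => h⟩
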